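/- arXiv:1211.0540 — 2 statements merged into one kernel-verified Lean document; each statement's English description precedes it below -/
import Mathlib

section
/- Let d ≥ 2, let b : [−1,1] → ℝ≥0 be measurable and λ ∈ ℝ. Let f : ℝ^d → ℝ≥0 be measurable such that (v, v∗, σ) ↦ f(v) f(v∗) ‖v − v∗‖^λ b((v − v∗)·σ/‖v − v∗‖) is integrable on ℝ^d × ℝ^d × S^{d−1}. Then for every ζ ∈ ℝ^d the Fourier transform of the collision operator satisfies (2π)^{−d/2} ∫_{ℝ^d} ∫_{ℝ^d} ∫_{S^{d−1}} f(v) f(v∗) ‖u‖^λ b(û·σ) ( e^{−i ζ·v'} − e^{−i ζ·v} ) dσ dv∗ dv = ∫_{ℝ^d} G(u, ζ) · (2π)^{−d/2} ∫_{ℝ^d} f(v) f(v − u) e^{−i ζ·v} dv du, where u = v − v∗, û = u/‖u‖, v' = v + (1/2)(‖u‖σ − u), and G(u, ζ) = ‖u‖^λ ∫_{S^{d−1}} b(û·σ) ( e^{−i (1/2) ζ·(‖u‖σ)} e^{i (1/2) ζ·u} − 1 ) dσ. -/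
/-!
Substituting `v∗ = v - u` and exchanging the `v`- and `u`-integrals reduces the claim to the
factorisation `e^{-iζ·v'} - e^{-iζ·v} = e^{-iζ·v} (e^{-iζ·‖u‖σ/2} e^{iζ·u/2} - 1)`, whose
`σ`-integral against `‖u‖^λ b` is `G(u, ζ)`. Fubini applies because the phase difference has
modulus at most `2`, so the integrand is dominated by twice the integrable collision kernel.
-/

open MeasureTheory Real
open scoped RealInnerProductSpace

open Complex in
theorem MeasureTheory.Integrable.ofReal_mul_cexp_sub_cexp {α : Type*} [MeasurableSpace α]
    {μ : Measure α} {K φ ψ : α → ℝ} (hK : Integrable K μ) (hφ : AEStronglyMeasurable φ μ)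
    (hψ : AEStronglyMeasurable ψ μ) :
    Integrable (fun x => (K x : ℂ) * (exp (-I * φ x) - exp (-I * ψ x))) μ := by
  have hphase (r : ℝ) : ‖exp (-I * r)‖ = 1 := by
    rw [neg_mul, mul_comm, ← neg_mul, ← ofReal_neg]; exact norm_exp_ofReal_mul_I _
  refine hK.ofReal.mul_bdd (c := 2) ?_ (ae_of_all _ fun x => ?_)
  · fun_prop
  · calc _ ≤ ‖exp (-I * φ x)‖ + ‖exp (-I * ψ x)‖ := norm_sub_le _ _
      _ = 2 := by rw [hphase, hphase]; norm_num

theorem integral_integral_swap_sub_left {G E : Type*} [NormedAddCommGroup E] [NormedSpace ℝ E]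
    [MeasurableSpace G] [AddGroup G] [MeasurableAdd₂ G] [MeasurableNeg G]
    {μ : Measure G} [SFinite μ] [μ.IsAddLeftInvariant] [μ.IsNegInvariant]
    {F : G → G → E} (hF : Integrable (Function.uncurry F) (μ.prod μ)) :
    ∫ v, ∫ w, F v w ∂μ ∂μ = ∫ u, ∫ v, F v (v - u) ∂μ ∂μ := by
  have hshear : MeasurePreserving (fun p : G × G => (p.1, p.1 - p.2)) (μ.prod μ) (μ.prod μ) :=
    (MeasurePreserving.id μ).skew_product (measurable_fst.sub measurable_snd)
      (ae_of_all _ fun v => Measure.map_sub_left_eq_self μ v)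
  calc ∫ v, ∫ w, F v w ∂μ ∂μ = ∫ v, ∫ u, F v (v - u) ∂μ ∂μ := by
        congr 1; ext v; exact (integral_sub_left_eq_self (F v) μ v).symm
    _ = ∫ u, ∫ v, F v (v - u) ∂μ ∂μ :=
        integral_integral_swap ((hshear.integrable_comp hF.aestronglyMeasurable).mpr hF)

theorem cexp_neg_I_inner_add_half_sub {E : Type*} [NormedAddCommGroup E] [InnerProductSpace ℝ E]
    (ζ v w u : E) :
    Complex.exp (-Complex.I * (⟪ζ, v + (1 / 2 : ℝ) • (w - u)⟫ : ℝ))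
        - Complex.exp (-Complex.I * (⟪ζ, v⟫ : ℝ)) =
      Complex.exp (-Complex.I * (⟪ζ, v⟫ : ℝ)) *
        (Complex.exp (-Complex.I * ((1 / 2 : ℝ) * ⟪ζ, w⟫ : ℝ)) *
          Complex.exp (Complex.I * ((1 / 2 : ℝ) * ⟪ζ, u⟫ : ℝ)) - 1) := by
  rw [mul_sub, mul_one, ← Complex.exp_add, ← Complex.exp_add, inner_add_right,
    real_inner_smul_right, inner_sub_right]
  congr 2
  push_cast
  ring

theorem boltzmann_fourier_transform_form_general
    (d : ℕ)
    (b : ℝ → ℝ)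
    (lam : ℝ)
    (f : EuclideanSpace ℝ (Fin d) → ℝ)
    (hint : Integrable
      (fun p : EuclideanSpace ℝ (Fin d) × EuclideanSpace ℝ (Fin d) ×
          Metric.sphere (0 : EuclideanSpace ℝ (Fin d)) 1 =>
        f p.1 * f p.2.1 * ‖p.1 - p.2.1‖ ^ lam *
          b (⟪p.1 - p.2.1, (p.2.2 : EuclideanSpace ℝ (Fin d))⟫ / ‖p.1 - p.2.1‖))
      (volume.prod (volume.prod
        ((volume : Measure (EuclideanSpace ℝ (Fin d))).toSphere))))
    (G : EuclideanSpace ℝ (Fin d) → EuclideanSpace ℝ (Fin d) → ℂ)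
    (hG : ∀ u ζ, G u ζ = (‖u‖ ^ lam : ℝ) *
      ∫ σ : Metric.sphere (0 : EuclideanSpace ℝ (Fin d)) 1,
        (b (⟪u, (σ : EuclideanSpace ℝ (Fin d))⟫ / ‖u‖) : ℂ) *
          (Complex.exp (-Complex.I * ((1 / 2 : ℝ) * ⟪ζ, ‖u‖ • (σ : EuclideanSpace ℝ (Fin d))⟫ : ℝ)) *
            Complex.exp (Complex.I * ((1 / 2 : ℝ) * ⟪ζ, u⟫ : ℝ)) - 1)
        ∂((volume : Measure (EuclideanSpace ℝ (Fin d))).toSphere))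
    (ζ : EuclideanSpace ℝ (Fin d)) :
    ((((2 * π) ^ (-(d : ℝ) / 2) : ℝ)) : ℂ) *
      ∫ v : EuclideanSpace ℝ (Fin d),
        ∫ vs : EuclideanSpace ℝ (Fin d),
          ∫ σ : Metric.sphere (0 : EuclideanSpace ℝ (Fin d)) 1,
            ((f v * f vs * ‖v - vs‖ ^ lam *
                b (⟪v - vs, (σ : EuclideanSpace ℝ (Fin d))⟫ / ‖v - vs‖) : ℝ) : ℂ) *
              (Complex.exp (-Complex.I *
                  (⟪ζ, v + (1 / 2 : ℝ) • (‖v - vs‖ • (σ : EuclideanSpace ℝ (Fin d)) - (v - vs))⟫ : ℝ))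
                - Complex.exp (-Complex.I * (⟪ζ, v⟫ : ℝ)))
            ∂((volume : Measure (EuclideanSpace ℝ (Fin d))).toSphere)
    =
    ∫ u : EuclideanSpace ℝ (Fin d),
      G u ζ * (((((2 * π) ^ (-(d : ℝ) / 2) : ℝ)) : ℂ) *
        ∫ v : EuclideanSpace ℝ (Fin d),
          ((f v * f (v - u) : ℝ) : ℂ) * Complex.exp (-Complex.I * (⟪ζ, v⟫ : ℝ))) := by
  set ν := (volume : Measure (EuclideanSpace ℝ (Fin d))).toSphere
  set H : EuclideanSpace ℝ (Fin d) → EuclideanSpace ℝ (Fin d) →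
      Metric.sphere (0 : EuclideanSpace ℝ (Fin d)) 1 → ℂ := fun v vs σ =>
    ((f v * f vs * ‖v - vs‖ ^ lam *
        b (⟪v - vs, (σ : EuclideanSpace ℝ (Fin d))⟫ / ‖v - vs‖) : ℝ) : ℂ) *
      (Complex.exp (-Complex.I *
          (⟪ζ, v + (1 / 2 : ℝ) • (‖v - vs‖ • (σ : EuclideanSpace ℝ (Fin d)) - (v - vs))⟫ : ℝ))
        - Complex.exp (-Complex.I * (⟪ζ, v⟫ : ℝ)))
  have hH : Integrable (fun p => H p.1 p.2.1 p.2.2) (volume.prod (volume.prod ν)) :=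
    hint.ofReal_mul_cexp_sub_cexp (by fun_prop) (by fun_prop)
  have hH_sphere : Integrable (Function.uncurry fun v vs => ∫ σ, H v vs σ ∂ν)
      (volume.prod volume) :=
    ((measurePreserving_prodAssoc volume volume ν).integrable_comp
      hH.aestronglyMeasurable |>.mpr hH).integral_prod_left
  have h_sphere (u v : EuclideanSpace ℝ (Fin d)) : ∫ σ, H v (v - u) σ ∂ν =
      G u ζ * (((f v * f (v - u) : ℝ) : ℂ) * Complex.exp (-Complex.I * (⟪ζ, v⟫ : ℝ))) := by
    simp only [H, sub_sub_cancel, cexp_neg_I_inner_add_half_sub, hG, ← integral_const_mul,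
      ← integral_mul_const]
    refine integral_congr_ae (ae_of_all _ fun σ => ?_)
    push_cast
    ring
  rw [integral_integral_swap_sub_left hH_sphere, ← integral_const_mul]
  congr 1; ext u
  simp only [h_sphere, integral_const_mul]
  ring

/-- The Fourier transform of the elastic Boltzmann collision operator, obtained
by taking the test function `φ(v) = (2π)^{-d/2} e^{-i ζ·v}` in the weak form,
equals the weighted integral `∫ G(u, ζ) F[f(v) f(v-u)](ζ) du`. -/
theorem boltzmann_fourier_transform_form
    (d : ℕ) (hd : 2 ≤ d)
    (b : ℝ → ℝ) (hb_meas : Measurable b) (hb_nonneg : ∀ x, 0 ≤ b x)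
    (lam : ℝ)
    (f : EuclideanSpace ℝ (Fin d) → ℝ) (hf_meas : Measurable f)
    (hf_nonneg : ∀ v, 0 ≤ f v)
    (hint : Integrable
      (fun p : EuclideanSpace ℝ (Fin d) × EuclideanSpace ℝ (Fin d) ×
          Metric.sphere (0 : EuclideanSpace ℝ (Fin d)) 1 =>
        f p.1 * f p.2.1 * ‖p.1 - p.2.1‖ ^ lam *
          b (⟪p.1 - p.2.1, (p.2.2 : EuclideanSpace ℝ (Fin d))⟫ / ‖p.1 - p.2.1‖))
      (volume.prod (volume.prod
        ((volume : Measure (EuclideanSpace ℝ (Fin d))).toSphere))))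
    (G : EuclideanSpace ℝ (Fin d) → EuclideanSpace ℝ (Fin d) → ℂ)
    (hG : ∀ u ζ, G u ζ = (‖u‖ ^ lam : ℝ) *
      ∫ σ : Metric.sphere (0 : EuclideanSpace ℝ (Fin d)) 1,
        (b (⟪u, (σ : EuclideanSpace ℝ (Fin d))⟫ / ‖u‖) : ℂ) *
          (Complex.exp (-Complex.I * ((1 / 2 : ℝ) * ⟪ζ, ‖u‖ • (σ : EuclideanSpace ℝ (Fin d))⟫ : ℝ)) *
            Complex.exp (Complex.I * ((1 / 2 : ℝ) * ⟪ζ, u⟫ : ℝ)) - 1)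
        ∂((volume : Measure (EuclideanSpace ℝ (Fin d))).toSphere))
    (ζ : EuclideanSpace ℝ (Fin d)) :
    ((((2 * π) ^ (-(d : ℝ) / 2) : ℝ)) : ℂ) *
      ∫ v : EuclideanSpace ℝ (Fin d),
        ∫ vs : EuclideanSpace ℝ (Fin d),
          ∫ σ : Metric.sphere (0 : EuclideanSpace ℝ (Fin d)) 1,
            ((f v * f vs * ‖v - vs‖ ^ lam *
                b (⟪v - vs, (σ : EuclideanSpace ℝ (Fin d))⟫ / ‖v - vs‖) : ℝ) : ℂ) *
              (Complex.exp (-Complex.I *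
                  (⟪ζ, v + (1 / 2 : ℝ) • (‖v - vs‖ • (σ : EuclideanSpace ℝ (Fin d)) - (v - vs))⟫ : ℝ))
                - Complex.exp (-Complex.I * (⟪ζ, v⟫ : ℝ)))
            ∂((volume : Measure (EuclideanSpace ℝ (Fin d))).toSphere)
    =
    ∫ u : EuclideanSpace ℝ (Fin d),
      G u ζ * (((((2 * π) ^ (-(d : ℝ) / 2) : ℝ)) : ℂ) *
        ∫ v : EuclideanSpace ℝ (Fin d),
          ((f v * f (v - u) : ℝ) : ℂ) * Complex.exp (-Complex.I * (⟪ζ, v⟫ : ℝ))) :=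
  boltzmann_fourier_transform_form_general d b lam f hint G hG ζ
end

section
/- Let d ≥ 1, let f : ℝ^d → ℂ be a Schwartz function, and let G : ℝ^d × ℝ^d → ℂ be measurable with u ↦ G(u, ζ) integrable for each ζ. Then for every ζ ∈ ℝ^d, the weighted integral of Fourier transforms of translated products equals a weighted convolution in Fourier space: ∫_{ℝ^d} G(u, ζ) · (2π)^{−d/2} ∫_{ℝ^d} f(v) f(v − u) e^{−i ζ·v} dv du = ∫_{ℝ^d} Ĝ(ξ, ζ) f̂(ζ − ξ) f̂(ξ) dξ, where f̂(ξ) = (2π)^{−d/2} ∫_{ℝ^d} f(v) e^{−i ξ·v} dv and Ĝ(ξ, ζ) = (2π)^{−d/2} ∫_{ℝ^d} G(u, ζ) e^{−i ξ·u} du. -/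
/-!
Write `Φ g ξ = ∫ g v e^{-i⟪ξ, v⟫} dv` for the unnormalised Fourier transform in angular frequency
and `c = (2π)^{-d/2}`. The right-hand side is `∫ Φ G(·, ζ) · H` with
`H ξ = c³ Φ f (ζ - ξ) Φ f ξ`, which by Fubini (`∫ Φ g · h = ∫ g · Φ h` for integrable `g`, `h`)
equals `∫ G(u, ζ) Φ H u du`. Substituting `ξ ↦ ζ - ξ` and using Fourier inversion
`∫ Φ f ξ e^{i⟪ξ, w⟫} dξ = (2π)^d f w` gives
`Φ (Φ f (ζ - ·) Φ f) u = (2π)^d ∫ f v f (v - u) e^{-i⟪ζ, v⟫} dv`, and `c² (2π)^d = 1`.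
-/

open MeasureTheory Real FourierTransform
open scoped RealInnerProductSpace

theorem Complex.norm_exp_neg_I_mul_ofReal (x : ℝ) : ‖Complex.exp (-Complex.I * x)‖ = 1 := by
  rw [neg_mul, ← mul_neg, ← Complex.ofReal_neg, Complex.norm_exp_I_mul_ofReal]

section

variable {V : Type*} [NormedAddCommGroup V] [InnerProductSpace ℝ V]

theorem continuous_innerₗ_div_two_pi :
    Continuous fun p : V × V ↦ ((2 * π)⁻¹ • innerₗ V) p.1 p.2 := by
  simp only [LinearMap.smul_apply, innerₗ_apply_apply, smul_eq_mul]
  fun_prop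

variable [FiniteDimensional ℝ V] [MeasurableSpace V] [BorelSpace V]

noncomputable def angularFourier (g : V → ℂ) (ξ : V) : ℂ :=
  ∫ v, g v * Complex.exp (-Complex.I * (⟪ξ, v⟫ : ℝ))

theorem angularFourier_eq_fourierIntegral (g : V → ℂ) :
    angularFourier g = VectorFourier.fourierIntegral 𝐞 volume ((2 * π)⁻¹ • innerₗ V) g := by
  ext ξ
  simp only [angularFourier, VectorFourier.fourierIntegral, Circle.smul_def,
    Real.fourierChar_apply, LinearMap.smul_apply, innerₗ_apply_apply, smul_eq_mul]
  congr 1 with v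
  rw [mul_comm, real_inner_comm]
  congr 2
  push_cast
  field_simp

theorem angularFourier_eq_fourier (g : V → ℂ) (ξ : V) :
    angularFourier g ξ = 𝓕 g ((2 * π)⁻¹ • ξ) := by
  simp only [angularFourier_eq_fourierIntegral, Real.fourier_eq, VectorFourier.fourierIntegral,
    LinearMap.smul_apply, innerₗ_apply_apply, smul_eq_mul, real_inner_smul_right]

theorem angularFourier_const_mul (a : ℂ) (g : V → ℂ) (ξ : V) :
    angularFourier (fun v ↦ a * g v) ξ = a * angularFourier g ξ := by
  simp only [angularFourier, mul_assoc, integral_const_mul]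

theorem norm_angularFourier_le (g : V → ℂ) (ξ : V) :
    ‖angularFourier g ξ‖ ≤ ∫ v, ‖g v‖ := by
  rw [angularFourier_eq_fourierIntegral]
  exact VectorFourier.norm_fourierIntegral_le_integral_norm _ _ _ _ _

theorem MeasureTheory.Integrable.continuous_angularFourier {g : V → ℂ} (hg : Integrable g) :
    Continuous (angularFourier g) := by
  rw [angularFourier_eq_fourierIntegral]
  exact VectorFourier.fourierIntegral_continuous Real.continuous_fourierChar
    continuous_innerₗ_div_two_pi hg

theorem integral_angularFourier_mul_eq {g h : V → ℂ} (hg : Integrable g) (hh : Integrable h) :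
    ∫ ξ, angularFourier g ξ * h ξ = ∫ u, g u * angularFourier h u := by
  have hflip : ((2 * π)⁻¹ • innerₗ V).flip = (2 * π)⁻¹ • innerₗ V := by
    ext v w
    simp [real_inner_comm]
  have := VectorFourier.integral_fourierIntegral_smul_eq_flip (L := (2 * π)⁻¹ • innerₗ V)
    Real.continuous_fourierChar continuous_innerₗ_div_two_pi hg hh
  rw [hflip, ← angularFourier_eq_fourierIntegral, ← angularFourier_eq_fourierIntegral] at this
  simpa only [smul_eq_mul] using this

namespace SchwartzMap

variable (f : 𝓢(V, ℂ))

theorem integrable_angularFourier : Integrable (angularFourier f) := by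
  simp_rw [funext (angularFourier_eq_fourier (f : V → ℂ)), ← fourier_coe]
  exact (𝓕 f).integrable.comp_smul (by positivity)

theorem integral_angularFourier_mul_exp (w : V) :
    ∫ ξ, angularFourier f ξ * Complex.exp (Complex.I * (⟪ξ, w⟫ : ℝ)) =
      (2 * π : ℂ) ^ Module.finrank ℝ V * f w := by
  have hscale (ξ : V) : angularFourier f ξ * Complex.exp (Complex.I * (⟪ξ, w⟫ : ℝ)) =
      𝐞 ⟪(2 * π)⁻¹ • ξ, w⟫ • 𝓕 (f : V → ℂ) ((2 * π)⁻¹ • ξ) := by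
    rw [angularFourier_eq_fourier, Circle.smul_def, Real.fourierChar_apply, smul_eq_mul,
      mul_comm, real_inner_smul_left]
    congr 2
    push_cast
    field_simp
  simp_rw [hscale]
  rw [Measure.integral_comp_inv_smul_of_nonneg volume
    (fun η ↦ 𝐞 ⟪η, w⟫ • 𝓕 (f : V → ℂ) η) (by positivity : (0 : ℝ) ≤ 2 * π),
    ← Real.fourierInv_eq, f.continuous.fourierInv_fourier_eq f.integrable
      (by simpa only [fourier_coe] using (𝓕 f).integrable), Complex.real_smul]
  push_cast
  rfl

theorem angularFourier_angularFourier_sub_mul_exp (ζ u w : V) :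
    angularFourier
        (fun ξ ↦ angularFourier f (ζ - ξ) * Complex.exp (-Complex.I * (⟪u, ζ - ξ⟫ : ℝ))) w =
      (2 * π : ℂ) ^ Module.finrank ℝ V * f (w - u) *
        Complex.exp (-Complex.I * (⟪ζ, w⟫ : ℝ)) := by
  have hexp (η : V) :
      Complex.exp (-Complex.I * (⟪u, η⟫ : ℝ)) * Complex.exp (-Complex.I * (⟪w, ζ - η⟫ : ℝ)) =
        Complex.exp (-Complex.I * (⟪ζ, w⟫ : ℝ)) * Complex.exp (Complex.I * (⟪η, w - u⟫ : ℝ)) := by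
    rw [← Complex.exp_add, ← Complex.exp_add, inner_sub_right, inner_sub_right,
      real_inner_comm u, real_inner_comm w ζ, real_inner_comm w η]
    push_cast
    ring_nf
  calc _ = ∫ η, angularFourier f η * Complex.exp (-Complex.I * (⟪u, η⟫ : ℝ)) *
          Complex.exp (-Complex.I * (⟪w, ζ - η⟫ : ℝ)) := by
        rw [angularFourier]
        conv_rhs => rw [← integral_sub_left_eq_self _ volume ζ]
        simp only [sub_sub_cancel]
    _ = Complex.exp (-Complex.I * (⟪ζ, w⟫ : ℝ)) *
          ∫ η, angularFourier f η * Complex.exp (Complex.I * (⟪η, w - u⟫ : ℝ)) := by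
        rw [← integral_const_mul]
        congr 1 with η
        rw [mul_assoc, hexp]
        ring
    _ = _ := by
        rw [integral_angularFourier_mul_exp]
        ring

theorem angularFourier_angularFourier_sub_mul_angularFourier (ζ u : V) :
    angularFourier (fun ξ ↦ angularFourier f (ζ - ξ) * angularFourier f ξ) u =
      (2 * π : ℂ) ^ Module.finrank ℝ V *
        ∫ v, f v * f (v - u) * Complex.exp (-Complex.I * (⟪ζ, v⟫ : ℝ)) := by
  set h : V → ℂ := fun ξ ↦
    angularFourier f (ζ - ξ) * Complex.exp (-Complex.I * (⟪u, ζ - ξ⟫ : ℝ))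
  have hh : Integrable h :=
    (f.integrable_angularFourier.comp_sub_left ζ).mul_bdd (by fun_prop)
      (ae_of_all _ fun ξ ↦ (Complex.norm_exp_neg_I_mul_ofReal _).le)
  calc _ = ∫ ξ, angularFourier f ξ * h ξ := by
        rw [angularFourier]
        conv_rhs => rw [← integral_sub_left_eq_self _ volume ζ]
        congr 1 with ξ
        simp only [h, sub_sub_cancel]
        ring
    _ = ∫ v, f v * angularFourier h v := integral_angularFourier_mul_eq f.integrable hh
    _ = _ := by
        simp only [h, angularFourier_angularFourier_sub_mul_exp, ← integral_const_mul]
        congr 1 with v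
        ring

end SchwartzMap

end

theorem weighted_convolution_fourier_general
    (d : ℕ)
    (f : SchwartzMap (EuclideanSpace ℝ (Fin d)) ℂ)
    (G : EuclideanSpace ℝ (Fin d) → EuclideanSpace ℝ (Fin d) → ℂ)
    (hG_int : ∀ ζ : EuclideanSpace ℝ (Fin d), Integrable (fun u => G u ζ))
    (ζ : EuclideanSpace ℝ (Fin d)) :
    (∫ u : EuclideanSpace ℝ (Fin d),
      G u ζ * (((((2 * π) ^ (-(d : ℝ) / 2) : ℝ)) : ℂ) *
        ∫ v : EuclideanSpace ℝ (Fin d),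
          f v * f (v - u) * Complex.exp (-Complex.I * (⟪ζ, v⟫ : ℝ))))
    =
    ∫ ξ : EuclideanSpace ℝ (Fin d),
      (((((2 * π) ^ (-(d : ℝ) / 2) : ℝ)) : ℂ) *
          ∫ u : EuclideanSpace ℝ (Fin d), G u ζ * Complex.exp (-Complex.I * (⟪ξ, u⟫ : ℝ))) *
        (((((2 * π) ^ (-(d : ℝ) / 2) : ℝ)) : ℂ) *
          ∫ v : EuclideanSpace ℝ (Fin d), f v * Complex.exp (-Complex.I * (⟪ζ - ξ, v⟫ : ℝ))) *
        (((((2 * π) ^ (-(d : ℝ) / 2) : ℝ)) : ℂ) *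
          ∫ v : EuclideanSpace ℝ (Fin d), f v * Complex.exp (-Complex.I * (⟪ξ, v⟫ : ℝ))) := by
  set c : ℝ := (2 * π) ^ (-(d : ℝ) / 2)
  change _ = ∫ ξ, (c * angularFourier (G · ζ) ξ) * (c * angularFourier f (ζ - ξ)) *
    (c * angularFourier f ξ)
  have hc_sq : c ^ 2 * (2 * π) ^ d = 1 := by
    rw [← Real.rpow_natCast c, ← Real.rpow_mul (by positivity), ← Real.rpow_natCast (2 * π),
      ← Real.rpow_add (by positivity)]
    norm_num
  have hc : (c : ℂ) ^ 3 * (2 * π : ℂ) ^ Module.finrank ℝ (EuclideanSpace ℝ (Fin d)) = c := by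
    rw [finrank_euclideanSpace_fin]
    exact_mod_cast (by linear_combination c * hc_sq : c ^ 3 * (2 * π) ^ d = c)
  set H := fun ξ ↦ (c : ℂ) ^ 3 * (angularFourier f (ζ - ξ) * angularFourier f ξ)
  have hH : Integrable H :=
    (f.integrable_angularFourier.bdd_mul
      (f.integrable.continuous_angularFourier.comp (continuous_sub_left ζ)).aestronglyMeasurable
      (ae_of_all _ fun ξ ↦ norm_angularFourier_le f (ζ - ξ))).const_mul _
  calc _ = ∫ u, G u ζ * angularFourier H u := by
        congr 1 with u
        rw [angularFourier_const_mul, f.angularFourier_angularFourier_sub_mul_angularFourier,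
          ← mul_assoc ((c : ℂ) ^ 3), hc]
    _ = ∫ ξ, angularFourier (G · ζ) ξ * H ξ :=
        (integral_angularFourier_mul_eq (hG_int ζ) hH).symm
    _ = _ := by
        congr 1 with ξ
        ring

/-- Writing the Fourier transform of the translated product `f(v) f(v-u)` as a
convolution of Fourier transforms turns the weighted integral into a weighted
convolution in Fourier space. -/
theorem weighted_convolution_fourier
    (d : ℕ) (hd : 1 ≤ d)
    (f : SchwartzMap (EuclideanSpace ℝ (Fin d)) ℂ)
    (G : EuclideanSpace ℝ (Fin d) → EuclideanSpace ℝ (Fin d) → ℂ)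
    (hG_meas : Measurable (fun p : EuclideanSpace ℝ (Fin d) × EuclideanSpace ℝ (Fin d) =>
      G p.1 p.2))
    (hG_int : ∀ ζ : EuclideanSpace ℝ (Fin d), Integrable (fun u => G u ζ))
    (ζ : EuclideanSpace ℝ (Fin d)) :
    (∫ u : EuclideanSpace ℝ (Fin d),
      G u ζ * (((((2 * π) ^ (-(d : ℝ) / 2) : ℝ)) : ℂ) *
        ∫ v : EuclideanSpace ℝ (Fin d),
          f v * f (v - u) * Complex.exp (-Complex.I * (⟪ζ, v⟫ : ℝ))))
    =
    ∫ ξ : EuclideanSpace ℝ (Fin d),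
      (((((2 * π) ^ (-(d : ℝ) / 2) : ℝ)) : ℂ) *
          ∫ u : EuclideanSpace ℝ (Fin d), G u ζ * Complex.exp (-Complex.I * (⟪ξ, u⟫ : ℝ))) *
        (((((2 * π) ^ (-(d : ℝ) / 2) : ℝ)) : ℂ) *
          ∫ v : EuclideanSpace ℝ (Fin d), f v * Complex.exp (-Complex.I * (⟪ζ - ξ, v⟫ : ℝ))) *
        (((((2 * π) ^ (-(d : ℝ) / 2) : ℝ)) : ℂ) *
          ∫ v : EuclideanSpace ℝ (Fin d), f v * Complex.exp (-Complex.I * (⟪ξ, v⟫ : ℝ))) :=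
  weighted_convolution_fourier_general d f G hG_int ζ
end
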